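/- Let n ≥ 1, let 0 < τ₁ < τ₂ be temperatures with τ_δ = 1/τ₁ − 1/τ₂, let L ∈ ℝ^{n×n} be symmetric positive semidefinite with positive semidefinite square root √L, let c ≥ 0, let U : ℝⁿ → ℝ be continuously differentiable with exp(−U(x)/τ₁ − U(y)/τ₂) Lebesgue integrable, and let μ be the probability measure on ℝⁿ × ℝⁿ with density proportional to π(x,y) = exp(−U(x)/τ₁ − U(y)/τ₂). Then for every twice continuously differentiable compactly supported f : ℝⁿ × ℝⁿ → ℝ, the Dirichlet form 𝓔ᶜ(f) = ∫ Γᶜ(f) dμ decomposes as 𝓔ᶜ(f) = ∫ ( τ₁ ‖√L ∇ₓf(x,y)‖² + τ₂ ‖√L ∇_yf(x,y)‖² ) dμ(x,y) + ∫ (c/2) s(x,y) (f(y,x) − f(x,y))² dμ(x,y), and both summands are nonnegative. -/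

import Mathlib

open MeasureTheory Matrix

/-- The swap function `s(x,y) = min{1, exp(τ_δ (U(x) − U(y)))}` with `τ_δ = 1/τ₁ − 1/τ₂`. -/
noncomputable def swapS {n : ℕ} (τ₁ τ₂ : ℝ) (U : (Fin n → ℝ) → ℝ) (x y : Fin n → ℝ) : ℝ :=
  min 1 (Real.exp ((1 / τ₁ - 1 / τ₂) * (U x - U y)))

/-- The joint density `π(x,y) = exp(−U(x)/τ₁ − U(y)/τ₂)`. -/
noncomputable def jointDensity {n : ℕ} (τ₁ τ₂ : ℝ) (U : (Fin n → ℝ) → ℝ)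
    (x y : Fin n → ℝ) : ℝ :=
  Real.exp (-(U x) / τ₁ - U y / τ₂)

/-- The gradient vector of `h : ℝⁿ → ℝ` at `x`, with components `∂h/∂x_i(x)`. -/
noncomputable def gradVec {n : ℕ} (h : (Fin n → ℝ) → ℝ) (x : Fin n → ℝ) : Fin n → ℝ :=
  fun i => fderiv ℝ h x (Pi.single i 1)

/-- The generator `𝓛ᶜ` of the replica exchange preconditioned Langevin jump process. -/
noncomputable def repGen {n : ℕ} (L : Matrix (Fin n) (Fin n) ℝ) (τ₁ τ₂ c : ℝ)
    (U : (Fin n → ℝ) → ℝ) (f : (Fin n → ℝ) → (Fin n → ℝ) → ℝ) (x y : Fin n → ℝ) : ℝ :=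
  -((L.mulVec (gradVec U x)) ⬝ᵥ (gradVec (fun x' => f x' y) x))
    + τ₁ * ∑ i, ∑ j, L i j *
        gradVec (fun x' => gradVec (fun x'' => f x'' y) x' j) x i
    - (L.mulVec (gradVec U y)) ⬝ᵥ (gradVec (f x) y)
    + τ₂ * ∑ i, ∑ j, L i j *
        gradVec (fun y' => gradVec (f x) y' j) y i
    + c * swapS τ₁ τ₂ U x y * (f y x - f x y)

/-- The Carré du Champ operator `Γᶜ(f) = (1/2)𝓛ᶜ(f²) − f 𝓛ᶜ(f)`. -/
noncomputable def carreDuChamp {n : ℕ} (L : Matrix (Fin n) (Fin n) ℝ) (τ₁ τ₂ c : ℝ)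
    (U : (Fin n → ℝ) → ℝ) (f : (Fin n → ℝ) → (Fin n → ℝ) → ℝ) (x y : Fin n → ℝ) : ℝ :=
  (1 / 2) * repGen L τ₁ τ₂ c U (fun x' y' => (f x' y') ^ 2) x y
    - f x y * repGen L τ₁ τ₂ c U f x y


/-!
The Dirichlet form is split pointwise, before any integration. The generator is a sum of two
preconditioned Langevin operators, one per replica, and a jump part. For a Langevin operator
the Leibniz rule makes the drift and the `f · ∂²f` terms of `½𝓛(f²) − f𝓛f` cancel, leaving
`τ ∇f ⬝ L∇f`, which is `τ‖√L∇f‖²` because `L = √L √L` with `√L` symmetric. For the jump part,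
`½(f(y,x)² − f(x,y)²) − f(x,y)(f(y,x) − f(x,y)) = ½(f(y,x) − f(x,y))²`. Both pieces are
continuous with compact support and `μ` is a finite measure, so the integral splits.
-/

section

variable {n : ℕ}

lemma gradVec_mul {u v : (Fin n → ℝ) → ℝ} {x : Fin n → ℝ}
    (hu : DifferentiableAt ℝ u x) (hv : DifferentiableAt ℝ v x) :
    gradVec (fun x' => u x' * v x') x = u x • gradVec v x + v x • gradVec u x := by
  ext i
  simp [gradVec, fderiv_fun_mul hu hv]

lemma gradVec_sq {g : (Fin n → ℝ) → ℝ} {x : Fin n → ℝ} (hg : DifferentiableAt ℝ g x) :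
    gradVec (fun x' => g x' ^ 2) x = (2 * g x) • gradVec g x := by
  simp only [sq, gradVec_mul hg hg]
  module

lemma contDiff_gradVec_apply {g : (Fin n → ℝ) → ℝ} (hg : ContDiff ℝ 2 g) (j : Fin n) :
    ContDiff ℝ 1 (fun x => gradVec g x j) :=
  (ContinuousLinearMap.apply ℝ ℝ (Pi.single j 1)).contDiff.comp (hg.fderiv_right le_rfl)

lemma gradVec_gradVec_sq {g : (Fin n → ℝ) → ℝ} (hg : ContDiff ℝ 2 g) (x : Fin n → ℝ)
    (i j : Fin n) :
    gradVec (fun x' => gradVec (fun x'' => g x'' ^ 2) x' j) x i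
      = 2 * (gradVec g x i * gradVec g x j + g x * gradVec (fun x' => gradVec g x' j) x i) := by
  have hg₁ : Differentiable ℝ g := hg.differentiable (by norm_num)
  have hgj : Differentiable ℝ (fun x' => gradVec g x' j) :=
    (contDiff_gradVec_apply hg j).differentiable one_ne_zero
  have h : (fun x' => gradVec (fun x'' => g x'' ^ 2) x' j)
      = fun x' => (2 * g x') * gradVec g x' j := by
    ext x'; simp [gradVec_sq (hg₁ x')]
  rw [h, gradVec_mul ((hg₁ x).const_mul 2) (hgj x), gradVec_mul (differentiableAt_const 2) (hg₁ x)]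
  simp [gradVec]
  ring

noncomputable def langevinGen (L : Matrix (Fin n) (Fin n) ℝ) (τ : ℝ)
    (U g : (Fin n → ℝ) → ℝ) (x : Fin n → ℝ) : ℝ :=
  -((L *ᵥ gradVec U x) ⬝ᵥ gradVec g x)
    + τ * ∑ i, ∑ j, L i j * gradVec (fun x' => gradVec g x' j) x i

lemma repGen_eq_langevinGen_add (L : Matrix (Fin n) (Fin n) ℝ) (τ₁ τ₂ c : ℝ)
    (U : (Fin n → ℝ) → ℝ) (f : (Fin n → ℝ) → (Fin n → ℝ) → ℝ) (x y : Fin n → ℝ) :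
    repGen L τ₁ τ₂ c U f x y
      = langevinGen L τ₁ U (fun x' => f x' y) x + langevinGen L τ₂ U (f x) y
        + c * swapS τ₁ τ₂ U x y * (f y x - f x y) := by
  simp only [repGen, langevinGen]
  ring

lemma sum_sum_mul_two_mul_add {R ι : Type*} [CommSemiring R] [Fintype ι] (L : Matrix ι ι R)
    (a : ι → R) (t : R) (H : ι → ι → R) :
    ∑ i, ∑ j, L i j * (2 * (a i * a j + t * H i j))
      = 2 * (a ⬝ᵥ L *ᵥ a) + 2 * t * ∑ i, ∑ j, L i j * H i j := by
  simp only [dotProduct, mulVec, Finset.mul_sum, ← Finset.sum_add_distrib]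
  refine Finset.sum_congr rfl fun i _ => Finset.sum_congr rfl fun j _ => ?_
  ring

lemma half_langevinGen_sq_sub (L : Matrix (Fin n) (Fin n) ℝ) (τ : ℝ)
    (U : (Fin n → ℝ) → ℝ) {g : (Fin n → ℝ) → ℝ} (hg : ContDiff ℝ 2 g) (x : Fin n → ℝ) :
    (1 / 2) * langevinGen L τ U (fun x' => g x' ^ 2) x - g x * langevinGen L τ U g x
      = τ * (gradVec g x ⬝ᵥ L *ᵥ gradVec g x) := by
  simp only [langevinGen, gradVec_sq ((hg.differentiable (by norm_num)) x),
    gradVec_gradVec_sq hg, dotProduct_smul, smul_eq_mul, sum_sum_mul_two_mul_add]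
  ring

lemma carreDuChamp_eq (L : Matrix (Fin n) (Fin n) ℝ) (τ₁ τ₂ c : ℝ)
    (U : (Fin n → ℝ) → ℝ) {f : (Fin n → ℝ) → (Fin n → ℝ) → ℝ}
    (hf : ContDiff ℝ 2 (Function.uncurry f)) (x y : Fin n → ℝ) :
    carreDuChamp L τ₁ τ₂ c U f x y
      = τ₁ * (gradVec (fun x' => f x' y) x ⬝ᵥ L *ᵥ gradVec (fun x' => f x' y) x)
        + τ₂ * (gradVec (f x) y ⬝ᵥ L *ᵥ gradVec (f x) y)
        + (c / 2) * swapS τ₁ τ₂ U x y * (f y x - f x y) ^ 2 := by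
  have h₁ := half_langevinGen_sq_sub L τ₁ U (g := fun x' => f x' y)
    (hf.comp (contDiff_id.prodMk contDiff_const)) x
  have h₂ := half_langevinGen_sq_sub L τ₂ U (g := f x)
    (hf.comp (contDiff_const.prodMk contDiff_id)) y
  simp only [carreDuChamp, repGen_eq_langevinGen_add]
  linear_combination h₁ + h₂

lemma dotProduct_mul_self_mulVec {R ι : Type*} [CommSemiring R] [Fintype ι]
    {S : Matrix ι ι R} (hS : S.IsSymm) (v : ι → R) :
    v ⬝ᵥ (S * S) *ᵥ v = ∑ i, (S *ᵥ v) i ^ 2 := by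
  rw [← mulVec_mulVec, dotProduct_mulVec, ← mulVec_transpose, hS.eq]
  simp only [dotProduct, sq]

lemma gradVec_fst_eq {f : (Fin n → ℝ) → (Fin n → ℝ) → ℝ} {x y : Fin n → ℝ} (hf : DifferentiableAt ℝ (Function.uncurry f) (x, y)) :
    gradVec (fun x' => f x' y) x
      = fun j => fderiv ℝ (Function.uncurry f) (x, y) (Pi.single j 1, 0) := by
  have h : HasFDerivAt (fun x' => f x' y)
      ((fderiv ℝ (Function.uncurry f) (x, y)).comp (.inl ℝ _ _)) x :=
    (hf.hasFDerivAt.comp x (hasFDerivAt_prodMk_left (𝕜 := ℝ) x y) :)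
  ext j
  simp [gradVec, h.fderiv]

lemma gradVec_snd_eq {f : (Fin n → ℝ) → (Fin n → ℝ) → ℝ} {x y : Fin n → ℝ} (hf : DifferentiableAt ℝ (Function.uncurry f) (x, y)) :
    gradVec (f x) y = fun j => fderiv ℝ (Function.uncurry f) (x, y) (0, Pi.single j 1) := by
  have h : HasFDerivAt (f x)
      ((fderiv ℝ (Function.uncurry f) (x, y)).comp (.inr ℝ _ _)) y :=
    hf.hasFDerivAt.comp y (hasFDerivAt_prodMk_right x y)
  ext j
  simp [gradVec, h.fderiv]

lemma continuous_swapS (τ₁ τ₂ : ℝ) {U : (Fin n → ℝ) → ℝ} (hU : Continuous U) :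
    Continuous fun p : (Fin n → ℝ) × (Fin n → ℝ) => swapS τ₁ τ₂ U p.1 p.2 := by
  unfold swapS
  fun_prop

lemma swapS_nonneg (τ₁ τ₂ : ℝ) (U : (Fin n → ℝ) → ℝ) (x y : Fin n → ℝ) :
    0 ≤ swapS τ₁ τ₂ U x y :=
  le_min zero_le_one (Real.exp_pos _).le

end

section Integrability

variable {α : Type*} [MeasurableSpace α]

lemma isFiniteMeasure_inv_smul_withDensity {ν : Measure α} {g : α → ℝ} (hg : Integrable g ν)
    (hg₀ : 0 ≤ᵐ[ν] g) :
    IsFiniteMeasure ((ENNReal.ofReal (∫ a, g a ∂ν))⁻¹ •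
      ν.withDensity fun a => ENNReal.ofReal (g a)) := by
  refine ⟨lt_of_le_of_lt ?_ ENNReal.one_lt_top⟩
  rw [Measure.smul_apply, withDensity_apply _ MeasurableSet.univ, Measure.restrict_univ,
    ← ofReal_integral_eq_lintegral_ofReal hg hg₀, smul_eq_mul]
  exact ENNReal.inv_mul_le_one _

variable {E : Type*} [NormedAddCommGroup E] [NormedSpace ℝ E] [MeasurableSpace E]
  [OpensMeasurableSpace E] (μ : Measure E) [IsFiniteMeasureOnCompacts μ]

lemma integrable_comp_fderiv {F : E → ℝ} (hF : ContDiff ℝ 1 F) (hFc : HasCompactSupport F)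
    {Φ : (E →L[ℝ] ℝ) → ℝ} (hΦ : Continuous Φ) (hΦ₀ : Φ 0 = 0) :
    Integrable (fun p => Φ (fderiv ℝ F p)) μ :=
  (hΦ.comp (hF.continuous_fderiv one_ne_zero)).integrable_of_hasCompactSupport
    ((hFc.fderiv (𝕜 := ℝ)).comp_left hΦ₀)

lemma integrable_mul_sq_sub_comp_swap {β : Type*} [TopologicalSpace β]
    [MeasurableSpace (β × β)] [OpensMeasurableSpace (β × β)] (μ : Measure (β × β))
    [IsFiniteMeasureOnCompacts μ] {F w : β × β → ℝ} (hF : Continuous F)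
    (hFc : HasCompactSupport F) (hw : Continuous w) :
    Integrable (fun p => w p * (F p.swap - F p) ^ 2) μ := by
  have hc : HasCompactSupport fun p => (F p.swap - F p) ^ 2 :=
    ((hFc.comp_homeomorph (Homeomorph.prodComm β β)).sub hFc).comp_left (g := (· ^ 2))
      (zero_pow two_ne_zero)
  exact (hw.mul (((hF.comp continuous_swap).sub hF).pow 2)).integrable_of_hasCompactSupport
    hc.mul_left

end Integrability

theorem dirichlet_form_decomposition_general (n : ℕ)
    (τ₁ τ₂ : ℝ) (hτ₁ : 0 < τ₁) (hτ₁₂ : τ₁ < τ₂)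
    (L sqrtL : Matrix (Fin n) (Fin n) ℝ)
    (hsqrtL : sqrtL.PosSemidef) (hsq : sqrtL * sqrtL = L)
    (c : ℝ) (hc : 0 ≤ c)
    (U : (Fin n → ℝ) → ℝ) (hU : ContDiff ℝ 1 U)
    (hπ : Integrable (fun p : (Fin n → ℝ) × (Fin n → ℝ) => jointDensity τ₁ τ₂ U p.1 p.2))
    (μ : Measure ((Fin n → ℝ) × (Fin n → ℝ)))
    (hμ : μ = (ENNReal.ofReal
          (∫ p : (Fin n → ℝ) × (Fin n → ℝ), jointDensity τ₁ τ₂ U p.1 p.2))⁻¹ •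
        volume.withDensity (fun p => ENNReal.ofReal (jointDensity τ₁ τ₂ U p.1 p.2)))
    (f : (Fin n → ℝ) → (Fin n → ℝ) → ℝ)
    (hf : ContDiff ℝ 2 (Function.uncurry f)) (hfc : HasCompactSupport (Function.uncurry f)) :
    (∫ p, carreDuChamp L τ₁ τ₂ c U f p.1 p.2 ∂μ
        = (∫ p, (τ₁ * ∑ i, (sqrtL.mulVec (gradVec (fun x' => f x' p.2) p.1) i) ^ 2
              + τ₂ * ∑ i, (sqrtL.mulVec (gradVec (f p.1) p.2) i) ^ 2) ∂μ)
          + ∫ p, (c / 2) * swapS τ₁ τ₂ U p.1 p.2 * (f p.2 p.1 - f p.1 p.2) ^ 2 ∂μ) ∧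
      0 ≤ ∫ p, (τ₁ * ∑ i, (sqrtL.mulVec (gradVec (fun x' => f x' p.2) p.1) i) ^ 2
              + τ₂ * ∑ i, (sqrtL.mulVec (gradVec (f p.1) p.2) i) ^ 2) ∂μ ∧
      0 ≤ ∫ p, (c / 2) * swapS τ₁ τ₂ U p.1 p.2 * (f p.2 p.1 - f p.1 p.2) ^ 2 ∂μ := by
  have hτ₂ : 0 < τ₂ := hτ₁.trans hτ₁₂
  have hF : Differentiable ℝ (Function.uncurry f) := hf.differentiable (by norm_num)
  have : IsFiniteMeasure μ :=
    hμ ▸ isFiniteMeasure_inv_smul_withDensity hπ (ae_of_all _ fun p => (Real.exp_pos _).le)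
  have hdiffusion : Integrable (fun p => τ₁ * ∑ i, (sqrtL *ᵥ gradVec (fun x' => f x' p.2) p.1) i ^ 2
      + τ₂ * ∑ i, (sqrtL *ᵥ gradVec (f p.1) p.2) i ^ 2) μ := by
    refine (integrable_comp_fderiv μ (hf.of_le one_le_two) hfc
      (Φ := fun T => τ₁ * ∑ i, (sqrtL *ᵥ fun j => T (Pi.single j 1, 0)) i ^ 2
        + τ₂ * ∑ i, (sqrtL *ᵥ fun j => T (0, Pi.single j 1)) i ^ 2)
      (by fun_prop) (by simp [← Pi.zero_def])).congr (ae_of_all _ fun p => ?_)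
    simp only [gradVec_fst_eq (hF p), gradVec_snd_eq (hF p)]
  have hswap : Integrable
      (fun p => (c / 2) * swapS τ₁ τ₂ U p.1 p.2 * (f p.2 p.1 - f p.1 p.2) ^ 2) μ :=
    integrable_mul_sq_sub_comp_swap μ hf.continuous hfc
      (continuous_const.mul (continuous_swapS τ₁ τ₂ hU.continuous))
  have hS : sqrtL.IsSymm := isHermitian_iff_isSymm.mp hsqrtL.isHermitian
  refine ⟨?_, integral_nonneg fun p => by positivity, integral_nonneg fun p => ?_⟩
  · rw [← integral_add hdiffusion hswap]
    refine integral_congr_ae (ae_of_all _ fun p => ?_)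
    beta_reduce
    rw [carreDuChamp_eq L τ₁ τ₂ c U hf, ← hsq, dotProduct_mul_self_mulVec hS,
      dotProduct_mul_self_mulVec hS]
  · have := swapS_nonneg τ₁ τ₂ U p.1 p.2
    positivity

/-- Decomposition of the Dirichlet form `𝓔ᶜ(f) = ∫ Γᶜ(f) dμ` of the replica exchange
preconditioned Langevin generator into a nonnegative diffusion part and a nonnegative
swap part, where `μ` is the probability measure with density proportional to
`π(x,y) = exp(−U(x)/τ₁ − U(y)/τ₂)`. -/
theorem dirichlet_form_decomposition (n : ℕ) (hn : 1 ≤ n)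
    (τ₁ τ₂ : ℝ) (hτ₁ : 0 < τ₁) (hτ₁₂ : τ₁ < τ₂)
    (L sqrtL : Matrix (Fin n) (Fin n) ℝ) (hL : L.PosSemidef)
    (hsqrtL : sqrtL.PosSemidef) (hsq : sqrtL * sqrtL = L)
    (c : ℝ) (hc : 0 ≤ c)
    (U : (Fin n → ℝ) → ℝ) (hU : ContDiff ℝ 1 U)
    (hπ : Integrable (fun p : (Fin n → ℝ) × (Fin n → ℝ) => jointDensity τ₁ τ₂ U p.1 p.2))
    (μ : Measure ((Fin n → ℝ) × (Fin n → ℝ)))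
    (hμ : μ = (ENNReal.ofReal
          (∫ p : (Fin n → ℝ) × (Fin n → ℝ), jointDensity τ₁ τ₂ U p.1 p.2))⁻¹ •
        volume.withDensity (fun p => ENNReal.ofReal (jointDensity τ₁ τ₂ U p.1 p.2)))
    (f : (Fin n → ℝ) → (Fin n → ℝ) → ℝ)
    (hf : ContDiff ℝ 2 (Function.uncurry f)) (hfc : HasCompactSupport (Function.uncurry f)) :
    (∫ p, carreDuChamp L τ₁ τ₂ c U f p.1 p.2 ∂μ
        = (∫ p, (τ₁ * ∑ i, (sqrtL.mulVec (gradVec (fun x' => f x' p.2) p.1) i) ^ 2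
              + τ₂ * ∑ i, (sqrtL.mulVec (gradVec (f p.1) p.2) i) ^ 2) ∂μ)
          + ∫ p, (c / 2) * swapS τ₁ τ₂ U p.1 p.2 * (f p.2 p.1 - f p.1 p.2) ^ 2 ∂μ) ∧
      0 ≤ ∫ p, (τ₁ * ∑ i, (sqrtL.mulVec (gradVec (fun x' => f x' p.2) p.1) i) ^ 2
              + τ₂ * ∑ i, (sqrtL.mulVec (gradVec (f p.1) p.2) i) ^ 2) ∂μ ∧
      0 ≤ ∫ p, (c / 2) * swapS τ₁ τ₂ U p.1 p.2 * (f p.2 p.1 - f p.1 p.2) ^ 2 ∂μ :=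
  dirichlet_form_decomposition_general n τ₁ τ₂ hτ₁ hτ₁₂ L sqrtL hsqrtL hsq c hc U hU hπ μ hμ f hf
    hfc
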